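/- arXiv:1811.04559 — 2 statements merged into one kernel-verified Lean document; each statement's English description precedes it below -/
import Mathlib

section
/- Let (L, ε, ∧_ε, ∨_ε) be a canonical ℰ-lattice. Then the restriction map ψ : Aut_ℰ(L) → Aut(Fix ε), f ↦ f|_{Fix ε}, is a group homomorphism whose kernel is Aut⁰_ℰ(L) = {f ∈ Aut_ℰ(L) : f(a) = a for all a ∈ Fix ε}; in particular Aut⁰_ℰ(L) is a normal subgroup of Aut_ℰ(L), and Aut⁰_ℰ(L) is isomorphic, as a group, to the direct product ∏_{a ∈ Fix ε} S'([a]), where S'([a]) is the subgroup of the symmetric group on the class [a] consisting of the permutations of [a] fixing a. -/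
/-- A canonical ℰ-lattice: a set `L` with a map `eps : L → L` and two associative,
commutative binary operations satisfying `a ∧ a = a ∨ a = ε a`,
the absorption laws `a ∧ (a ∨ b) = a ∨ (a ∧ b) = ε a`, and (canonicity)
all meets and joins are fixed points of `eps`. -/
structure CELattice (L : Type*) where
  eps : L → L
  meet : L → L → L
  join : L → L → L
  meet_assoc : ∀ a b c, meet a (meet b c) = meet (meet a b) c
  join_assoc : ∀ a b c, join a (join b c) = join (join a b) c
  meet_comm : ∀ a b, meet a b = meet b a
  join_comm : ∀ a b, join a b = join b a
  meet_self : ∀ a, meet a a = eps a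
  join_self : ∀ a, join a a = eps a
  meet_absorb : ∀ a b, meet a (join a b) = eps a
  join_absorb : ∀ a b, join a (meet a b) = eps a
  meet_canonical : ∀ a b, eps (meet a b) = meet a b
  join_canonical : ∀ a b, eps (join a b) = join a b

namespace CELattice

variable {L : Type*}

/-- The set of fixed points of `eps`. -/
def Fix (E : CELattice L) : Set L := {a | E.eps a = a}

/-- The class `[a] = {b | ε b = ε a}`. -/
def cls (E : CELattice L) (a : L) : Set L := {b | E.eps b = E.eps a}

/-- The fixed points of `eps`, as a type. -/
abbrev FixT (E : CELattice L) : Type _ := {a : L // E.eps a = a}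

/-- An ℰ-lattice isomorphism: a bijection commuting with `eps` and preserving
meets and joins. -/
def IsEIso {L₁ L₂ : Type*} (E₁ : CELattice L₁) (E₂ : CELattice L₂) (f : L₁ → L₂) : Prop :=
  Function.Bijective f ∧ (∀ a, f (E₁.eps a) = E₂.eps (f a)) ∧
    (∀ a b, f (E₁.meet a b) = E₂.meet (f a) (f b)) ∧
    (∀ a b, f (E₁.join a b) = E₂.join (f a) (f b))

end CELattice

namespace CELattice

variable {L : Type*}

/-- The group `Aut_ℰ(L)` of ℰ-lattice automorphisms of a canonical ℰ-lattice,
as a subgroup of the symmetric group on `L`. -/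
def EAut (E : CELattice L) : Subgroup (Equiv.Perm L) where
  carrier := {f : Equiv.Perm L | (∀ a, f (E.eps a) = E.eps (f a)) ∧
    (∀ a b, f (E.meet a b) = E.meet (f a) (f b)) ∧
    (∀ a b, f (E.join a b) = E.join (f a) (f b))}
  one_mem' := by simp
  mul_mem' := by
    rintro f g ⟨hf1, hf2, hf3⟩ ⟨hg1, hg2, hg3⟩
    refine ⟨fun a => ?_, fun a b => ?_, fun a b => ?_⟩ <;>
      simp [Equiv.Perm.mul_apply, hg1, hg2, hg3, hf1, hf2, hf3]
  inv_mem' := by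
    rintro f ⟨hf1, hf2, hf3⟩
    refine ⟨fun a => ?_, fun a b => ?_, fun a b => ?_⟩ <;>
      (apply f.injective;
       simp [hf1, hf2, hf3, Equiv.apply_symm_apply])

/-- The meet of two fixed points, as a fixed point (the lattice operation on `Fix ε`). -/
def fixMeet (E : CELattice L) (a b : E.FixT) : E.FixT :=
  ⟨E.meet a.1 b.1, E.meet_canonical _ _⟩

/-- The join of two fixed points, as a fixed point (the lattice operation on `Fix ε`). -/
def fixJoin (E : CELattice L) (a b : E.FixT) : E.FixT :=
  ⟨E.join a.1 b.1, E.join_canonical _ _⟩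

/-- The group `Aut(Fix ε)` of lattice automorphisms of the lattice of fixed points. -/
def AutFix (E : CELattice L) : Subgroup (Equiv.Perm E.FixT) where
  carrier := {σ : Equiv.Perm E.FixT | (∀ a b, σ (E.fixMeet a b) = E.fixMeet (σ a) (σ b)) ∧
    (∀ a b, σ (E.fixJoin a b) = E.fixJoin (σ a) (σ b))}
  one_mem' := by simp
  mul_mem' := by
    rintro f g ⟨hf1, hf2⟩ ⟨hg1, hg2⟩
    refine ⟨fun a b => ?_, fun a b => ?_⟩ <;>
      simp [Equiv.Perm.mul_apply, hg1, hg2, hf1, hf2]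
  inv_mem' := by
    rintro f ⟨hf1, hf2⟩
    refine ⟨fun a b => ?_, fun a b => ?_⟩ <;>
      (apply f.injective; simp [hf1, hf2, Equiv.apply_symm_apply])

/-- `S'([a])`: the subgroup of the symmetric group on the class `[a]`
consisting of the permutations fixing `a`. -/
def Sprime (E : CELattice L) (a : L) : Subgroup (Equiv.Perm {b : L // E.eps b = E.eps a}) where
  carrier := {σ | σ ⟨a, rfl⟩ = ⟨a, rfl⟩}
  one_mem' := by simp
  mul_mem' := by
    intro f g hf hg
    simp only [Set.mem_setOf_eq] at *
    simp [Equiv.Perm.mul_apply, hg, hf]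
  inv_mem' := by
    intro f hf
    simp only [Set.mem_setOf_eq] at *
    rw [Equiv.Perm.inv_eq_iff_eq, hf]

end CELattice

/-!
An ℰ-automorphism commutes with `ε`, so it maps `Fix ε` onto itself and restriction is a
homomorphism. One fixing `Fix ε` pointwise maps each class `[a]` onto itself (as
`ε (f b) = f (ε b) = ε b`) and fixes its representative `a ∈ Fix ε`. Conversely, in a
canonical ℰ-lattice `a ∧ b = (a ∧ b) ∧ (a ∧ b) = (a ∧ a) ∧ (b ∧ b) = ε a ∧ ε b` lies in
`Fix ε` and depends only on the classes of `a` and `b` (likewise for `∨`), so any family of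
permutations of the classes fixing their representatives glues to an ℰ-automorphism fixing
`Fix ε` pointwise.
-/

namespace CELattice

variable {L : Type*} (E : CELattice L)

instance : Std.Associative E.meet := ⟨fun a b c => (E.meet_assoc a b c).symm⟩
instance : Std.Commutative E.meet := ⟨E.meet_comm⟩
instance : Std.Associative E.join := ⟨fun a b c => (E.join_assoc a b c).symm⟩
instance : Std.Commutative E.join := ⟨E.join_comm⟩

theorem eps_eps (a : L) : E.eps (E.eps a) = E.eps a := by
  rw [← E.meet_self a, E.meet_canonical]

theorem meet_eq_meet_eps (a b : L) : E.meet a b = E.meet (E.eps a) (E.eps b) :=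
  calc E.meet a b = E.meet (E.meet a b) (E.meet a b) := by rw [E.meet_self, E.meet_canonical]
    _ = E.meet (E.meet a a) (E.meet b b) := by ac_rfl
    _ = E.meet (E.eps a) (E.eps b) := by rw [E.meet_self, E.meet_self]

theorem join_eq_join_eps (a b : L) : E.join a b = E.join (E.eps a) (E.eps b) :=
  calc E.join a b = E.join (E.join a b) (E.join a b) := by rw [E.join_self, E.join_canonical]
    _ = E.join (E.join a a) (E.join b b) := by ac_rfl
    _ = E.join (E.eps a) (E.eps b) := by rw [E.join_self, E.join_self]

theorem meet_congr {a a' b b' : L} (ha : E.eps a = E.eps a') (hb : E.eps b = E.eps b') :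
    E.meet a b = E.meet a' b' := by
  rw [E.meet_eq_meet_eps a, ha, hb, ← E.meet_eq_meet_eps]

theorem join_congr {a a' b b' : L} (ha : E.eps a = E.eps a') (hb : E.eps b = E.eps b') :
    E.join a b = E.join a' b' := by
  rw [E.join_eq_join_eps a, ha, hb, ← E.join_eq_join_eps]

variable {E}

theorem eps_apply_eq_apply_iff (f : E.EAut) (x : L) :
    E.eps ((f : Equiv.Perm L) x) = (f : Equiv.Perm L) x ↔ E.eps x = x := by
  rw [← f.2.1, (f : Equiv.Perm L).injective.eq_iff]

theorem mem_eAut_of_eps_apply {g : Equiv.Perm L} (hg : ∀ b, E.eps (g b) = E.eps b)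
    (hfix : ∀ a, E.eps a = a → g a = a) : g ∈ E.EAut := by
  refine ⟨fun a => ?_, fun a b => ?_, fun a b => ?_⟩
  · rw [hfix _ (E.eps_eps a), hg]
  · rw [hfix _ (E.meet_canonical a b), E.meet_congr (hg a) (hg b)]
  · rw [hfix _ (E.join_canonical a b), E.join_congr (hg a) (hg b)]

variable (E)

def restrict : E.EAut →* E.AutFix where
  toFun f := ⟨(f : Equiv.Perm L).subtypePerm (eps_apply_eq_apply_iff f),
    ⟨fun a b => Subtype.ext (f.2.2.1 a b), fun a b => Subtype.ext (f.2.2.2 a b)⟩⟩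
  map_one' := rfl
  map_mul' _ _ := rfl

theorem restrict_apply (f : E.EAut) (a : E.FixT) :
    ((E.restrict f : Equiv.Perm E.FixT) a : L) = (f : Equiv.Perm L) a := rfl

theorem mem_ker_restrict_iff (f : E.EAut) :
    f ∈ E.restrict.ker ↔ ∀ a : L, E.eps a = a → (f : Equiv.Perm L) a = a := by
  simp only [MonoidHom.mem_ker, Subtype.ext_iff, Equiv.ext_iff, restrict_apply]
  exact ⟨fun h a ha => h ⟨a, ha⟩, fun h a => h a a.2⟩

variable {E}

theorem eps_apply_of_mem_ker {f : E.EAut} (hf : f ∈ E.restrict.ker) (b : L) :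
    E.eps ((f : Equiv.Perm L) b) = E.eps b := by
  rw [← f.2.1, (E.mem_ker_restrict_iff f).1 hf _ (E.eps_eps b)]

/-- Acts on the class of each `a ∈ Fix ε` by `σ a`; `b` lies in the class of `ε b ∈ Fix ε`. -/
def glue (σ : ∀ a : E.FixT, E.Sprime a) (b : L) : L :=
  ((σ ⟨E.eps b, E.eps_eps b⟩).val ⟨b, (E.eps_eps b).symm⟩).1

theorem glue_eq_of_eps_eq (σ : ∀ a : E.FixT, E.Sprime a) {a : E.FixT} {b : L}
    (hb : E.eps b = a) : glue σ b = ((σ a).val ⟨b, hb.trans a.2.symm⟩).1 := by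
  obtain ⟨_, _⟩ := a
  cases hb
  rfl

theorem eps_glue (σ : ∀ a : E.FixT, E.Sprime a) (b : L) : E.eps (glue σ b) = E.eps b :=
  ((σ ⟨E.eps b, E.eps_eps b⟩).val ⟨b, (E.eps_eps b).symm⟩).2.trans (E.eps_eps b)

theorem glue_eq_self_of_eps_eq_self (σ : ∀ a : E.FixT, E.Sprime a) {a : L} (ha : E.eps a = a) :
    glue σ a = a := by
  rw [glue_eq_of_eps_eq σ (a := ⟨a, ha⟩) ha]
  exact congrArg Subtype.val (σ ⟨a, ha⟩).2

theorem glue_glue (σ τ : ∀ a : E.FixT, E.Sprime a) (b : L) :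
    glue σ (glue τ b) = glue (σ * τ) b := by
  rw [glue_eq_of_eps_eq σ (a := ⟨E.eps b, E.eps_eps b⟩) (eps_glue τ b)]
  rfl

theorem glue_one (b : L) : glue (1 : ∀ a : E.FixT, E.Sprime a) b = b := rfl

def gluePerm (σ : ∀ a : E.FixT, E.Sprime a) : Equiv.Perm L where
  toFun := glue σ
  invFun := glue σ⁻¹
  left_inv b := by rw [glue_glue, inv_mul_cancel, glue_one]
  right_inv b := by rw [glue_glue, mul_inv_cancel, glue_one]

theorem gluePerm_mem_eAut (σ : ∀ a : E.FixT, E.Sprime a) : gluePerm σ ∈ E.EAut :=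
  mem_eAut_of_eps_apply (eps_glue σ) fun _ => glue_eq_self_of_eps_eq_self σ

variable (E)

def kerRestrictEquivPiSprime : E.restrict.ker ≃* ∀ a : E.FixT, E.Sprime a where
  toFun f a := ⟨((f : E.EAut) : Equiv.Perm L).subtypePerm fun b => by
      rw [eps_apply_of_mem_ker f.2],
    Subtype.ext ((E.mem_ker_restrict_iff f).1 f.2 a a.2)⟩
  invFun σ := ⟨⟨gluePerm σ, gluePerm_mem_eAut σ⟩,
    (E.mem_ker_restrict_iff _).2 fun _ => glue_eq_self_of_eps_eq_self σ⟩
  left_inv _ := rfl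
  right_inv σ := funext fun a => Subtype.ext <| Equiv.ext fun b =>
    Subtype.ext (glue_eq_of_eps_eq σ (b.2.trans a.2))
  map_mul' _ _ := rfl

end CELattice

open CELattice in
theorem restriction_hom_ker_general {L : Type*} (E : CELattice L) :
    ∃ ψ : EAut E →* AutFix E,
      (∀ (f : EAut E) (a : E.FixT),
        (((ψ f : Equiv.Perm E.FixT) a : L)) = (f : Equiv.Perm L) (a : L)) ∧
      (∀ f : EAut E,
        f ∈ ψ.ker ↔ ∀ a : L, E.eps a = a → (f : Equiv.Perm L) a = a) ∧
      ψ.ker.Normal ∧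
      Nonempty (ψ.ker ≃* ∀ a : E.FixT, Sprime E (a : L)) :=
  ⟨E.restrict, E.restrict_apply, E.mem_ker_restrict_iff, inferInstance,
    ⟨E.kerRestrictEquivPiSprime⟩⟩

open CELattice in
/-- Proposition 2 (2.1), kernel part: for a canonical ℰ-lattice `L`, the restriction map
`ψ : Aut_ℰ(L) → Aut(Fix ε)` is a group homomorphism whose kernel is
`Aut⁰_ℰ(L) = {f | f fixes Fix ε pointwise}`; this kernel is a normal subgroup of
`Aut_ℰ(L)` and is isomorphic to the direct product `∏_{a ∈ Fix ε} S'([a])`. -/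
theorem restriction_hom_ker {L : Type*} [Nonempty L] (E : CELattice L) :
    ∃ ψ : EAut E →* AutFix E,
      (∀ (f : EAut E) (a : E.FixT),
        (((ψ f : Equiv.Perm E.FixT) a : L)) = (f : Equiv.Perm L) (a : L)) ∧
      (∀ f : EAut E,
        f ∈ ψ.ker ↔ ∀ a : L, E.eps a = a → (f : Equiv.Perm L) a = a) ∧
      ψ.ker.Normal ∧
      Nonempty (ψ.ker ≃* ∀ a : E.FixT, Sprime E (a : L)) :=
  restriction_hom_ker_general E
end

section
/- Let G₁ and G₂ be groups and suppose there exists an ℰL-isomorphism f : L(G₁) → L(G₂). If G₁ is a simple group, then G₂ is a simple group. -/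
/-!
An ℰL-isomorphism commutes with normal cores, so it matches the normal subgroups of `G₁` with
those of `G₂` (a subgroup is normal iff it is its own core). On normal subgroups it preserves
`⊓` and `⊔`; since `⊥` absorbs meets and `⊤` absorbs joins, this forces `f ⊥ = ⊥` and `f ⊤ = ⊤`.
Hence the only normal subgroups of `G₂` are `f ⊥ = ⊥` and `f ⊤ = ⊤`, and these differ by
injectivity.
-/

/-- An ℰL-isomorphism from a group `G₁` to a group `G₂`: a bijection between the subgroup
lattices which commutes with taking normal cores and preserves the ℰ-lattice meet
`H ∧ K = H_G ∩ K_G` and join `H ∨ K = H_G K_G` (the join of the two normal cores). -/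
def IsELIso {G₁ G₂ : Type*} [Group G₁] [Group G₂] (f : Subgroup G₁ → Subgroup G₂) : Prop :=
  Function.Bijective f ∧
    (∀ H : Subgroup G₁, f H.normalCore = (f H).normalCore) ∧
    (∀ H K : Subgroup G₁,
      f (H.normalCore ⊓ K.normalCore) = (f H).normalCore ⊓ (f K).normalCore) ∧
    (∀ H K : Subgroup G₁,
      f (H.normalCore ⊔ K.normalCore) = (f H).normalCore ⊔ (f K).normalCore)

theorem Subgroup.normalCore_eq_self_iff {G : Type*} [Group G] {H : Subgroup G} :
    H.normalCore = H ↔ H.Normal :=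
  ⟨fun h => h ▸ H.normalCore_normal, fun _ => H.normalCore_eq_self⟩

namespace IsELIso

variable {G₁ G₂ : Type*} [Group G₁] [Group G₂] {f : Subgroup G₁ → Subgroup G₂}

theorem normal_iff (hf : IsELIso f) {H : Subgroup G₁} : (f H).Normal ↔ H.Normal := by
  rw [← Subgroup.normalCore_eq_self_iff, ← Subgroup.normalCore_eq_self_iff, ← hf.2.1,
    hf.1.1.eq_iff]

theorem exists_normal_eq (hf : IsELIso f) {N : Subgroup G₂} (hN : N.Normal) :
    ∃ H : Subgroup G₁, H.Normal ∧ f H = N := by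
  obtain ⟨H, rfl⟩ := hf.1.2 N
  exact ⟨H, hf.normal_iff.1 hN, rfl⟩

theorem map_inf_of_normal (hf : IsELIso f) {H K : Subgroup G₁} (hH : H.Normal) (hK : K.Normal) :
    f (H ⊓ K) = f H ⊓ f K := by
  have := hf.normal_iff.2 hH
  have := hf.normal_iff.2 hK
  simpa only [Subgroup.normalCore_eq_self] using hf.2.2.1 H K

theorem map_sup_of_normal (hf : IsELIso f) {H K : Subgroup G₁} (hH : H.Normal) (hK : K.Normal) :
    f (H ⊔ K) = f H ⊔ f K := by
  have := hf.normal_iff.2 hH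
  have := hf.normal_iff.2 hK
  simpa only [Subgroup.normalCore_eq_self] using hf.2.2.2 H K

theorem map_bot (hf : IsELIso f) : f ⊥ = ⊥ := by
  obtain ⟨H, hH, hfH⟩ := hf.exists_normal_eq (⊥ : Subgroup G₂).normal_of_characteristic
  calc f ⊥ = f (⊥ ⊓ H) := by rw [bot_inf_eq]
    _ = f ⊥ ⊓ f H := hf.map_inf_of_normal (Subgroup.normal_of_characteristic ⊥) hH
    _ = ⊥ := by rw [hfH, inf_bot_eq]

theorem map_top (hf : IsELIso f) : f ⊤ = ⊤ := by
  obtain ⟨H, hH, hfH⟩ := hf.exists_normal_eq (⊤ : Subgroup G₂).normal_of_characteristic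
  calc f ⊤ = f (⊤ ⊔ H) := by rw [top_sup_eq]
    _ = f ⊤ ⊔ f H := hf.map_sup_of_normal (Subgroup.normal_of_characteristic ⊤) hH
    _ = ⊤ := by rw [hfH, sup_top_eq]

theorem isSimpleGroup (hf : IsELIso f) [IsSimpleGroup G₁] : IsSimpleGroup G₂ := by
  have : Nontrivial (Subgroup G₂) :=
    ⟨⟨⊥, ⊤, by simpa only [hf.map_bot, hf.map_top] using hf.1.1.ne bot_ne_top⟩⟩
  have := Subgroup.nontrivial_iff.1 this
  refine ⟨fun N hN => ?_⟩
  obtain ⟨H, hH, rfl⟩ := hf.exists_normal_eq hN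
  rcases IsSimpleGroup.eq_bot_or_eq_top_of_normal H hH with rfl | rfl
  · exact .inl hf.map_bot
  · exact .inr hf.map_top

end IsELIso

/-- Proposition 1 (2.2), simple case: if `G₁` and `G₂` are ℰL-isomorphic and `G₁` is
simple, then `G₂` is simple. -/
theorem simple_of_eliso {G₁ G₂ : Type*} [Group G₁] [Group G₂]
    (hf : ∃ f : Subgroup G₁ → Subgroup G₂, IsELIso f)
    (h : IsSimpleGroup G₁) : IsSimpleGroup G₂ := by
  obtain ⟨f, hf⟩ := hf
  exact hf.isSimpleGroup
end
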